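/- Let q be a prime power with q ≡ 3 (mod 4), let C be an irreducible conic in PG(2,q), let L be an external line of C, and let S be the set of exterior points of C lying on L. If Q is a point of PG(2,q) such that S ∪ {Q} is an exterior set of C, then Q lies on L. -/

import Mathlib

/-!
`PG(2,F)`: points are the 1-dimensional subspaces of `F^3` (modelled as the
projectivization of `Fin 3 → F`), lines are the 2-dimensional subspaces.
-/

variable {F : Type*} [Field F]

/-- The points of `PG(2,F)`: 1-dimensional subspaces of `F^3`. -/
abbrev PGPoint (F : Type*) [Field F] := Projectivization F (Fin 3 → F)

/-- A line of `PG(2,F)` is a 2-dimensional subspace of `F^3`. -/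
def IsProjLine (F : Type*) [Field F] (L : Submodule F (Fin 3 → F)) : Prop :=
  Module.finrank F L = 2

/-- The set of projective points lying on the subspace `L`. -/
def pointsOn (L : Submodule F (Fin 3 → F)) : Set (PGPoint F) :=
  {P | P.submodule ≤ L}

/-- `S` is a set without tangents: no line of `PG(2,F)` meets `S` in exactly one point. -/
def NoTangents (S : Set (PGPoint F)) : Prop :=
  ∀ L : Submodule F (Fin 3 → F), IsProjLine F L →
    ¬ (∃! P : PGPoint F, P ∈ S ∩ pointsOn L)

/-- The conic (zero set in `PG(2,F)`) of a quadratic form `Q` on `F^3`. -/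
def conicSet (Q : QuadraticForm F (Fin 3 → F)) : Set (PGPoint F) :=
  {P | ∀ v ∈ P.submodule, Q v = 0}

/-- Nondegeneracy of a quadratic form (via its polar form). -/
def NondegQF (Q : QuadraticForm F (Fin 3 → F)) : Prop :=
  ∀ v : Fin 3 → F, (∀ w, QuadraticMap.polar Q v w = 0) → v = 0

/-- A tangent line of a point set `C`: a line meeting `C` in exactly one point. -/
def IsTangentLine (C : Set (PGPoint F)) (L : Submodule F (Fin 3 → F)) : Prop :=
  IsProjLine F L ∧ ∃! P : PGPoint F, P ∈ C ∩ pointsOn L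

/-- An external line of a point set `C`: a line meeting `C` in no point. -/
def IsExternalLine (C : Set (PGPoint F)) (L : Submodule F (Fin 3 → F)) : Prop :=
  IsProjLine F L ∧ C ∩ pointsOn L = ∅

/-- An exterior point of `C`: a point not on `C` lying on some tangent line of `C`. -/
def IsExteriorPoint (C : Set (PGPoint F)) (P : PGPoint F) : Prop :=
  P ∉ C ∧ ∃ L : Submodule F (Fin 3 → F), IsTangentLine C L ∧ P ∈ pointsOn L

/-- An interior point of `C`: a point neither on `C` nor exterior to `C`. -/
def IsInteriorPoint (C : Set (PGPoint F)) (P : PGPoint F) : Prop :=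
  P ∉ C ∧ ¬ IsExteriorPoint C P

/-- An exterior set of `C`: every line containing at least two of its points is
an external line of `C`. -/
def IsExteriorSet (C E : Set (PGPoint F)) : Prop :=
  ∀ L : Submodule F (Fin 3 → F), IsProjLine F L →
    (∃ P1 ∈ E ∩ pointsOn L, ∃ P2 ∈ E ∩ pointsOn L, P1 ≠ P2) → IsExternalLine C L

/-!
Since `q ≡ 3 (mod 4)`, `-1` is not a square in `F`. The form `Q` is anisotropic on the external
line `L`, so its discriminant there is a square and `Q` restricted to `L` is `x² + y²`; in a frame
adapted to `L` and its pole the conic becomes `x² + y² = g z²` with `g ≠ 0`. A point `(x, y, 0)`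
with `x² + y² = g` is exterior, the tangent at `(y, -x, 1)` passing through it.

Write `Q₀ = (u₁, u₂, t)` with `t ≠ 0`. It suffices to find such an exterior point `S` for which the
line `Q₀S` meets the conic, i.e. a direction `(x, y)` of squared length `g` leading from `(u₁, u₂)`
to the circle of squared radius `g t²`. Rotating by `(u₁, u₂)` reduces this to two circles about
the origin having a common ordinate, which holds because each circle has `q + 1` points and hence at
least `(q + 1) / 2` ordinates.
-/

section FiniteField

open Finset

lemma two_ne_zero_of_not_isSquare_neg_one (hF : ¬ IsSquare (-1 : F)) : (2 : F) ≠ 0 := by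
  intro h
  exact hF ⟨1, by linear_combination -h⟩

lemma eq_zero_and_eq_zero_of_mul_self_add_mul_self_eq_zero (hF : ¬ IsSquare (-1 : F)) {a b : F}
    (h : a * a + b * b = 0) : a = 0 ∧ b = 0 := by
  have key (a b : F) (h : a * a + b * b = 0) : b = 0 := by
    by_contra hb
    exact hF ⟨a / b, by field_simp; linear_combination -h⟩
  exact ⟨key b a (by linear_combination h), key a b h⟩

variable [Fintype F]

lemma card_odd_of_not_isSquare_neg_one (hF : ¬ IsSquare (-1 : F)) : Fintype.card F % 2 = 1 := by
  have := (not_congr FiniteField.isSquare_neg_one_iff).1 hF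
  omega

lemma exists_mul_mul_self_add_mul_mul_self_eq (hq : Fintype.card F % 2 = 1) {α β : F}
    (hα : α ≠ 0) (hβ : β ≠ 0) (c : F) : ∃ x y : F, α * (x * x) + β * (y * y) = c := by
  open Polynomial in
  obtain ⟨x, y, hxy⟩ := FiniteField.exists_root_sum_quadratic
    (f := C α * X ^ 2) (g := C β * X ^ 2 - C c) (by compute_degree!)
    (by compute_degree!) hq
  exact ⟨x, y, by simp only [eval_mul, eval_C, eval_pow, eval_X, eval_sub] at hxy
                  linear_combination hxy⟩

lemma isSquare_mul_of_not_isSquare {a b : F} (ha : ¬ IsSquare a) (hb : ¬ IsSquare b) :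
    IsSquare (a * b) := by
  classical
  have ha0 : a ≠ 0 := by rintro rfl; exact ha ⟨0, by simp⟩
  have hb0 : b ≠ 0 := by rintro rfl; exact hb ⟨0, by simp⟩
  rw [← quadraticChar_one_iff_isSquare (mul_ne_zero ha0 hb0), map_mul,
    quadraticChar_neg_one_iff_not_isSquare.2 ha, quadraticChar_neg_one_iff_not_isSquare.2 hb]
  norm_num

section Circle

variable [DecidableEq F]

/-- Stereographic projection from `(-1, 0)` identifies the unit circle with `F ∪ {∞}`. -/
lemma card_add_one_le_card_circle_one (hF : ¬ IsSquare (-1 : F)) :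
    Fintype.card F + 1 ≤ #{p : F × F | p.1 * p.1 + p.2 * p.2 = 1} := by
  have h2 := two_ne_zero_of_not_isSquare_neg_one hF
  have hden (τ : F) : 1 + τ ^ 2 ≠ 0 := fun h => hF ⟨τ, by linear_combination -h⟩
  let φ : Option F → F × F := fun o =>
    o.elim (-1, 0) fun τ => ((1 - τ ^ 2) / (1 + τ ^ 2), 2 * τ / (1 + τ ^ 2))
  let ψ : F × F → Option F := fun p => if p.1 = -1 then none else some (p.2 / (1 + p.1))
  have hφ : Function.LeftInverse ψ φ := by
    rintro (_ | τ)
    · simp [φ, ψ]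
    · have := hden τ
      have hne : (1 - τ ^ 2) / (1 + τ ^ 2) ≠ -1 := by
        rw [Ne, div_eq_iff (hden τ)]
        intro h
        exact h2 (by linear_combination h)
      have h1 : 1 + (1 - τ ^ 2) / (1 + τ ^ 2) = 2 / (1 + τ ^ 2) := by
        field_simp
        ring
      simp only [φ, ψ, Option.elim, if_neg hne, h1]
      field_simp
  calc Fintype.card F + 1 = #(univ : Finset (Option F)) := by simp
    _ ≤ _ := by
      refine card_le_card_of_injOn φ (fun o _ => ?_) hφ.injective.injOn
      rcases o with _ | τ
      · simp [φ]
      · have := hden τ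
        simp only [φ, Option.elim, coe_filter, mem_univ, true_and, Set.mem_ofPred_eq]
        field_simp
        ring

lemma card_circle_one_le_card_circle (hq : Fintype.card F % 2 = 1) {m : F} (hm : m ≠ 0) :
    #{p : F × F | p.1 * p.1 + p.2 * p.2 = 1} ≤ #{p : F × F | p.1 * p.1 + p.2 * p.2 = m} := by
  obtain ⟨a, b, hab⟩ := exists_mul_mul_self_add_mul_mul_self_eq hq one_ne_zero one_ne_zero m
  simp only [one_mul] at hab
  refine card_le_card_of_injOn (fun p => (a * p.1 - b * p.2, b * p.1 + a * p.2)) ?_ ?_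
  · intro p hp
    simp only [coe_filter, mem_univ, true_and, Set.mem_ofPred_eq] at hp ⊢
    linear_combination (a * a + b * b) * hp + hab
  · intro p _ p' _ h
    simp only [Prod.mk.injEq] at h
    refine Prod.ext (mul_left_cancel₀ hm ?_) (mul_left_cancel₀ hm ?_)
    · linear_combination a * h.1 + b * h.2 - (p.1 - p'.1) * hab
    · linear_combination a * h.2 - b * h.1 - (p.2 - p'.2) * hab

lemma card_add_one_le_two_mul_card_isSquare_sub_mul_self (hF : ¬ IsSquare (-1 : F)) {m : F}
    (hm : m ≠ 0) : Fintype.card F + 1 ≤ 2 * #{D : F | IsSquare (m - D * D)} := by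
  refine (card_add_one_le_card_circle_one hF).trans <|
    (card_circle_one_le_card_circle (card_odd_of_not_isSquare_neg_one hF) hm).trans <|
    card_le_mul_card_image_of_maps_to (f := Prod.snd) ?_ 2 ?_
  · intro p hp
    simp only [mem_filter, mem_univ, true_and] at hp ⊢
    exact ⟨p.1, by linear_combination -hp⟩
  · intro D hD
    obtain ⟨P, hP⟩ := (mem_filter.1 hD).2
    calc _ ≤ #({(P, D), (-P, D)} : Finset (F × F)) := by
          refine card_le_card fun p hp => ?_
          simp only [mem_filter, mem_univ, true_and] at hp
          obtain ⟨hp, rfl⟩ := hp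
          have : (p.1 - P) * (p.1 + P) = 0 := by linear_combination hp + hP
          rcases mul_eq_zero.1 this with h | h
          · simp [← sub_eq_zero.1 h]
          · simp [← eq_neg_of_add_eq_zero_left h]
      _ ≤ 2 := card_le_two

end Circle

lemma exists_common_ordinate (hF : ¬ IsSquare (-1 : F)) {m₁ m₂ : F} (hm₁ : m₁ ≠ 0)
    (hm₂ : m₂ ≠ 0) : ∃ D P r : F, P * P + D * D = m₁ ∧ r * r + D * D = m₂ := by
  classical
  have h₁ := card_add_one_le_two_mul_card_isSquare_sub_mul_self hF hm₁
  have h₂ := card_add_one_le_two_mul_card_isSquare_sub_mul_self hF hm₂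
  set A₁ : Finset F := {D | IsSquare (m₁ - D * D)}
  set A₂ : Finset F := {D | IsSquare (m₂ - D * D)}
  obtain ⟨D, hD⟩ : (A₁ ∩ A₂).Nonempty := by
    rw [← card_pos]
    have := card_inter_add_card_union A₁ A₂
    have := card_le_univ (A₁ ∪ A₂)
    omega
  simp only [A₁, A₂, mem_inter, mem_filter, mem_univ, true_and] at hD
  obtain ⟨⟨P, hP⟩, ⟨r, hr⟩⟩ := hD
  exact ⟨D, P, r, by linear_combination -hP, by linear_combination -hr⟩

lemma exists_direction_to_circle (hF : ¬ IsSquare (-1 : F)) {g t : F} (hg : g ≠ 0)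
    (ht : t ≠ 0) (u₁ u₂ : F) : ∃ x y b : F, x * x + y * y = g ∧
      (u₁ + b * x) * (u₁ + b * x) + (u₂ + b * y) * (u₂ + b * y) = g * (t * t) := by
  by_cases hN : u₁ * u₁ + u₂ * u₂ = 0
  · obtain ⟨rfl, rfl⟩ := eq_zero_and_eq_zero_of_mul_self_add_mul_self_eq_zero hF hN
    obtain ⟨x, y, hxy⟩ := exists_mul_mul_self_add_mul_mul_self_eq
      (card_odd_of_not_isSquare_neg_one hF) one_ne_zero one_ne_zero g
    refine ⟨x, y, t, by linear_combination hxy, ?_⟩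
    linear_combination t * t * hxy
  · -- rotating by `u` carries the circle `x² + y² = g` onto `P² + D² = (u₁² + u₂²) g`
    obtain ⟨D, P, r, hPD, hrD⟩ := exists_common_ordinate hF (mul_ne_zero hN hg)
      (mul_ne_zero (mul_ne_zero hg ht) (mul_ne_zero hg ht))
    have hN' : u₁ ^ 2 + u₂ ^ 2 ≠ 0 := by rwa [sq, sq]
    refine ⟨(u₁ * P - u₂ * D) / (u₁ * u₁ + u₂ * u₂), (u₂ * P + u₁ * D) / (u₁ * u₁ + u₂ * u₂),
      (r - P) / g, ?_, ?_⟩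
    · field_simp
      linear_combination (u₁ ^ 2 + u₂ ^ 2) * hPD
    · field_simp
      linear_combination ((u₁ ^ 2 + u₂ ^ 2) * (r - P) ^ 2 - g * (u₁ ^ 2 + u₂ ^ 2) ^ 2) * hPD
        + g * (u₁ ^ 2 + u₂ ^ 2) ^ 2 * hrD

end FiniteField

section QuadraticForm

open QuadraticMap Module Submodule

variable {V : Type*} [AddCommGroup V] [Module F V] (Q : QuadraticForm F V)

lemma QuadraticMap.polar_self_eq_two_mul (v : V) : polar Q v v = 2 * Q v := by
  rw [polar_self, two_smul, two_mul]

lemma QuadraticMap.map_smul_add_smul (a b : F) (v w : V) :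
    Q (a • v + b • w) = a * a * Q v + a * b * polar Q v w + b * b * Q w := by
  rw [QuadraticMap.map_add (⇑Q), QuadraticMap.map_smul, QuadraticMap.map_smul, polar_smul_left,
    polar_smul_right]
  simp only [smul_eq_mul]
  ring

variable {Q}

lemma exists_polar_eq_zero_of_finrank_eq_two {L : Submodule F V} (hL : finrank F L = 2) (v : V) :
    ∃ w ∈ L, w ≠ 0 ∧ polar Q v w = 0 := by
  have : FiniteDimensional F L := Module.finite_of_finrank_eq_succ hL
  have hker := LinearMap.ker_ne_bot_of_finrank_lt (f := polarBilin Q v ∘ₗ L.subtype)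
    (by rw [finrank_self, hL]; norm_num)
  obtain ⟨w, hw, hw0⟩ := exists_mem_ne_zero_of_ne_bot hker
  exact ⟨w, w.2, by simpa using hw0, hw⟩

lemma not_isSquare_neg_mul_of_polar_eq_zero (h2 : (2 : F) ≠ 0) {L : Submodule F V}
    (hQL : ∀ v ∈ L, Q v = 0 → v = 0) {v w : V} (hv : v ∈ L) (hw : w ∈ L) (hv0 : v ≠ 0) (hw0 : w ≠ 0)
    (hvw : polar Q v w = 0) : ¬ IsSquare (-(Q v * Q w)) := by
  rintro ⟨r, hr⟩
  have hQv : Q v ≠ 0 := fun h => hv0 (hQL v hv h)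
  have hQw : Q w ≠ 0 := fun h => hw0 (hQL w hw h)
  have hz : r • v + Q v • w = 0 := hQL _ (add_mem (smul_mem _ _ hv) (smul_mem _ _ hw)) <| by
    rw [map_smul_add_smul, hvw]
    linear_combination -(Q v) * hr
  have := congrArg (polar Q w) hz
  rw [polar_add_right, polar_smul_right, polar_smul_right, polar_comm, hvw, polar_zero_right,
    polar_self_eq_two_mul] at this
  simp only [smul_eq_mul, mul_zero, zero_add] at this
  exact mul_ne_zero hQv (mul_ne_zero h2 hQw) this

lemma exists_orthonormal_pair [Fintype F] (hF : ¬ IsSquare (-1 : F)) {L : Submodule F V}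
    (hL : finrank F L = 2) (hQL : ∀ v ∈ L, Q v = 0 → v = 0) :
    ∃ f₁ ∈ L, ∃ f₂ ∈ L, Q f₁ = 1 ∧ Q f₂ = 1 ∧ polar Q f₁ f₂ = 0 := by
  have h2 := two_ne_zero_of_not_isSquare_neg_one hF
  obtain ⟨v, hv, hv0⟩ := exists_mem_ne_zero_of_ne_bot (p := L) (by rintro rfl; simp at hL)
  obtain ⟨w, hw, hw0, hvw⟩ := exists_polar_eq_zero_of_finrank_eq_two (Q := Q) hL v
  have hα : Q v ≠ 0 := fun h => hv0 (hQL v hv h)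
  have hβ : Q w ≠ 0 := fun h => hw0 (hQL w hw h)
  obtain ⟨d, hd⟩ : IsSquare (Q v * Q w) := by
    simpa using isSquare_mul_of_not_isSquare hF
      (not_isSquare_neg_mul_of_polar_eq_zero h2 hQL hv hw hv0 hw0 hvw)
  have hd0 : d ≠ 0 := by rintro rfl; exact mul_ne_zero hα hβ (by simpa using hd)
  obtain ⟨x, y, hxy⟩ :=
    exists_mul_mul_self_add_mul_mul_self_eq (card_odd_of_not_isSquare_neg_one hF) hα hβ 1
  refine ⟨x • v + y • w, add_mem (smul_mem _ _ hv) (smul_mem _ _ hw),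
    d⁻¹ • ((Q w * y) • v + (-(Q v * x)) • w),
    smul_mem _ _ (add_mem (smul_mem _ _ hv) (smul_mem _ _ hw)), ?_, ?_, ?_⟩
  · rw [map_smul_add_smul, hvw]
    linear_combination hxy
  · rw [QuadraticMap.map_smul, map_smul_add_smul, hvw, smul_eq_mul]
    field_simp
    linear_combination (Q v * Q w) * hxy + hd
  · simp only [polar_add_left, polar_add_right, polar_smul_left, polar_smul_right,
      polar_self_eq_two_mul, hvw, polar_comm Q w v, smul_eq_mul]
    ring

omit Q in
lemma finrank_span_pair {v w : V} (h : LinearIndependent F ![v, w]) :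
    finrank F (span F {v, w}) = 2 := by
  have hrange : Set.range ![v, w] = {v, w} := by
    simp only [Matrix.range_cons, Matrix.range_empty, Set.union_empty, Set.singleton_union]
  rw [← hrange, finrank_span_eq_card h, Fintype.card_fin]

lemma exists_polar_eq_zero_of_ne_top (h2 : (2 : F) ≠ 0) {L : Submodule F V} (hL : L ≠ ⊤)
    {f₁ f₂ : V} (hf₁L : f₁ ∈ L) (hf₂L : f₂ ∈ L) (hf₁ : Q f₁ = 1) (hf₂ : Q f₂ = 1)
    (h12 : polar Q f₁ f₂ = 0) : ∃ p ∉ L, polar Q f₁ p = 0 ∧ polar Q f₂ p = 0 := by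
  obtain ⟨z, hz⟩ : ∃ z, z ∉ L := by
    by_contra! h
    exact hL (eq_top_iff.2 fun x _ => h x)
  refine ⟨z - (polar Q f₁ z / 2) • f₁ - (polar Q f₂ z / 2) • f₂, fun hp => hz ?_, ?_, ?_⟩
  · have := add_mem hp (add_mem (smul_mem _ (polar Q f₁ z / 2) hf₁L)
      (smul_mem _ (polar Q f₂ z / 2) hf₂L))
    rwa [sub_sub, sub_add_cancel] at this
  · simp only [polar_sub_right, polar_smul_right, polar_self_eq_two_mul, hf₁, h12, smul_eq_mul]
    field_simp
    ring
  · simp only [polar_sub_right, polar_smul_right, polar_self_eq_two_mul, hf₂, polar_comm Q f₂ f₁,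
      h12, smul_eq_mul]
    field_simp
    ring

lemma span_pair_eq_of_orthonormal (h2 : (2 : F) ≠ 0) {L : Submodule F V} (hL : finrank F L = 2)
    {f₁ f₂ : V} (hf₁L : f₁ ∈ L) (hf₂L : f₂ ∈ L) (hf₁ : Q f₁ = 1) (hf₂ : Q f₂ = 1)
    (h12 : polar Q f₁ f₂ = 0) : span F {f₁, f₂} = L := by
  have hind : LinearIndependent F ![f₁, f₂] := by
    refine LinearIndependent.pair_iff.2 fun a b hab => ⟨?_, ?_⟩
    · have := congrArg (polar Q f₁) hab
      simp only [polar_add_right, polar_smul_right, polar_self_eq_two_mul, hf₁, h12,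
        polar_zero_right, smul_eq_mul] at this
      simpa [h2] using this
    · have := congrArg (polar Q f₂) hab
      simp only [polar_add_right, polar_smul_right, polar_self_eq_two_mul, hf₂, polar_comm Q f₂ f₁,
        h12, polar_zero_right, smul_eq_mul] at this
      simpa [h2] using this
  have : FiniteDimensional F L := Module.finite_of_finrank_eq_succ hL
  exact eq_of_le_of_finrank_eq ((span_le).2 (Set.insert_subset hf₁L
    (Set.singleton_subset_iff.2 hf₂L))) (by rw [hL, finrank_span_pair hind])

lemma polar_eq_of_diag {f₁ f₂ p : V} {g : F}
    (hdiag : ∀ x y z : F, Q (x • f₁ + y • f₂ + z • p) = x * x + y * y - g * (z * z))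
    (x y z x' y' z' : F) : polar Q (x • f₁ + y • f₂ + z • p) (x' • f₁ + y' • f₂ + z' • p) =
      2 * (x * x' + y * y' - g * (z * z')) := by
  rw [polar, show x • f₁ + y • f₂ + z • p + (x' • f₁ + y' • f₂ + z' • p) =
    (x + x') • f₁ + (y + y') • f₂ + (z + z') • p by module, hdiag, hdiag, hdiag]
  ring

end QuadraticForm

section ProjectivePlane

open QuadraticMap Module Submodule Projectivization

lemma linearIndependent_pair_of_notMem {V : Type*} [AddCommGroup V] [Module F V]
    {L : Submodule F V} {v w : V} (hv : v ∉ L) (hw : w ∈ L) (hw0 : w ≠ 0) :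
    LinearIndependent F ![v, w] := by
  refine LinearIndependent.pair_iff.2 fun a b hab => ?_
  obtain rfl : a = 0 := by
    by_contra ha
    refine hv ?_
    rw [← inv_smul_smul₀ ha v, eq_neg_of_add_eq_zero_left hab]
    exact smul_mem _ _ (neg_mem (smul_mem _ _ hw))
  rw [zero_smul, zero_add, smul_eq_zero] at hab
  exact ⟨rfl, hab.resolve_right hw0⟩

variable {Q : QuadraticForm F (Fin 3 → F)} {L : Submodule F (Fin 3 → F)}

lemma mk_mem_pointsOn_iff {v : Fin 3 → F} (hv : v ≠ 0) : mk F v hv ∈ pointsOn L ↔ v ∈ L := by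
  rw [pointsOn, Set.mem_ofPred_eq, submodule_mk, span_singleton_le_iff_mem]

lemma mk_mem_conicSet_iff {v : Fin 3 → F} (hv : v ≠ 0) : mk F v hv ∈ conicSet Q ↔ Q v = 0 := by
  refine ⟨fun h => h v ?_, fun h w hw => ?_⟩
  · rw [submodule_mk]
    exact mem_span_singleton_self v
  · rw [submodule_mk] at hw
    obtain ⟨a, rfl⟩ := mem_span_singleton.1 hw
    rw [QuadraticMap.map_smul, h, smul_zero]

lemma ne_zero_of_isExternalLine (hL : IsExternalLine (conicSet Q) L) {v : Fin 3 → F}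
    (hvL : v ∈ L) (hv : v ≠ 0) : Q v ≠ 0 := by
  intro h
  have hmem : mk F v hv ∈ conicSet Q ∩ pointsOn L :=
    ⟨(mk_mem_conicSet_iff hv).2 h, (mk_mem_pointsOn_iff hv).2 hvL⟩
  rw [hL.2] at hmem
  exact hmem

lemma sup_span_singleton_eq_top (hL : finrank F L = 2) {p : Fin 3 → F} (hp : p ∉ L) :
    L ⊔ span F {p} = ⊤ := by
  have hlt : L < L ⊔ span F {p} :=
    lt_of_le_of_ne le_sup_left fun h => hp (h ▸ mem_sup_right (mem_span_singleton_self p))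
  have h₁ := finrank_lt_finrank_of_lt hlt
  have h₂ := (L ⊔ span F {p}).finrank_le
  rw [finrank_fin_fun] at h₂
  exact eq_top_of_finrank_eq (by rw [finrank_fin_fun]; omega)

lemma eq_zero_of_polar_eq_zero (hQ : NondegQF Q) (hL : finrank F L = 2) {p : Fin 3 → F}
    (hp : p ∉ L) {u : Fin 3 → F} (huL : ∀ w ∈ L, polar Q u w = 0) (hup : polar Q u p = 0) :
    u = 0 := by
  refine hQ u fun v => ?_
  have hv : v ∈ L ⊔ span F {p} := by rw [sup_span_singleton_eq_top hL hp]; exact mem_top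
  obtain ⟨w, hw, z, hz, rfl⟩ := mem_sup.1 hv
  obtain ⟨a, rfl⟩ := mem_span_singleton.1 hz
  rw [polar_add_right, polar_smul_right, huL w hw, hup, smul_zero, add_zero]

lemma not_linearIndependent_of_isotropic (hQ : NondegQF Q) {c v : Fin 3 → F} (hc : Q c = 0)
    (hv : Q v = 0) (hcv : polar Q c v = 0) : ¬ LinearIndependent F ![c, v] := by
  intro hind
  have hW := finrank_span_pair hind
  have hQW : ∀ w ∈ span F {c, v}, Q w = 0 := by
    intro w hw
    obtain ⟨a, b, rfl⟩ := mem_span_pair.1 hw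
    rw [map_smul_add_smul, hc, hv, hcv]
    ring
  obtain ⟨z, hz⟩ : ∃ z, z ∉ span F {c, v} := by
    by_contra! h
    have htop : span F {c, v} = ⊤ := eq_top_iff.2 fun x _ => h x
    rw [htop, finrank_top, finrank_fin_fun] at hW
    omega
  obtain ⟨u, hu, hu0, hzu⟩ := exists_polar_eq_zero_of_finrank_eq_two (Q := Q) hW z
  refine hu0 (eq_zero_of_polar_eq_zero hQ hW hz (fun w hw => ?_) (by rwa [polar_comm]))
  rw [polar, hQW _ (add_mem hu hw), hQW u hu, hQW w hw, sub_zero, sub_zero]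

lemma isTangentLine_ker_polarBilin (hQ : NondegQF Q) {c : Fin 3 → F} (hc : c ≠ 0) (hQc : Q c = 0) :
    IsTangentLine (conicSet Q) (LinearMap.ker (polarBilin Q c)) := by
  have hpol : polarBilin Q c ≠ 0 := fun h => hc (hQ c fun w => by
    simpa using LinearMap.congr_fun h w)
  refine ⟨?_, mk F c hc, ⟨(mk_mem_conicSet_iff hc).2 hQc, (mk_mem_pointsOn_iff hc).2 ?_⟩, ?_⟩
  · have := Module.Dual.finrank_ker_add_one_of_ne_zero hpol
    rw [finrank_fin_fun] at this
    exact (by omega : finrank F (LinearMap.ker (polarBilin Q c)) = 2)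
  · simp [hQc]
  · rintro P ⟨hPC, hPT⟩
    rw [← P.mk_rep, mk_mem_conicSet_iff] at hPC
    rw [← P.mk_rep, mk_mem_pointsOn_iff, LinearMap.mem_ker, polarBilin_apply_apply] at hPT
    obtain ⟨a, ha⟩ : ∃ a : F, a • c = P.rep := by
      by_contra! h
      exact not_linearIndependent_of_isotropic hQ hQc hPC hPT ((LinearIndependent.pair_iff' hc).2 h)
    rw [← P.mk_rep]
    exact (mk_eq_mk_iff' F _ _ _ hc).2 ⟨a, ha⟩

lemma isExteriorPoint_mk (hQ : NondegQF Q) {c s : Fin 3 → F} (hc : c ≠ 0) (hQc : Q c = 0)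
    (hs : s ≠ 0) (hQs : Q s ≠ 0) (hcs : polar Q c s = 0) :
    IsExteriorPoint (conicSet Q) (mk F s hs) :=
  ⟨fun h => hQs ((mk_mem_conicSet_iff hs).1 h), _, isTangentLine_ker_polarBilin hQ hc hQc,
    (mk_mem_pointsOn_iff hs).2 (by rwa [LinearMap.mem_ker, polarBilin_apply_apply])⟩

lemma IsExteriorSet.isExternalLine_span_pair {C E : Set (PGPoint F)} (hE : IsExteriorSet C E)
    {v w : Fin 3 → F} (hvw : LinearIndependent F ![v, w]) (hv : v ≠ 0) (hw : w ≠ 0)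
    (hvE : mk F v hv ∈ E) (hwE : mk F w hw ∈ E) : IsExternalLine C (span F {v, w}) := by
  refine hE _ (finrank_span_pair hvw) ⟨mk F v hv, ⟨hvE, (mk_mem_pointsOn_iff hv).2 ?_⟩,
    mk F w hw, ⟨hwE, (mk_mem_pointsOn_iff hw).2 ?_⟩, fun h => ?_⟩
  · exact subset_span (by simp)
  · exact subset_span (by simp)
  · obtain ⟨a, ha⟩ := (mk_eq_mk_iff' F v w hv hw).1 h
    have := (LinearIndependent.pair_iff.1 hvw (-1) a (by rw [ha]; module)).1
    exact one_ne_zero (neg_eq_zero.1 this)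

lemma not_isExternalLine_span_pair {v w : Fin 3 → F} (hvw : LinearIndependent F ![v, w]) {b : F}
    (h : Q (v + b • w) = 0) : ¬ IsExternalLine (conicSet Q) (span F {v, w}) := by
  rintro ⟨-, hext⟩
  have h0 : v + b • w ≠ 0 := fun h0 =>
    one_ne_zero (LinearIndependent.pair_iff.1 hvw 1 b (by rwa [one_smul])).1
  have hmem : mk F _ h0 ∈ conicSet Q ∩ pointsOn (span F {v, w}) :=
    ⟨(mk_mem_conicSet_iff h0).2 h, (mk_mem_pointsOn_iff h0).2
      (add_mem (subset_span (by simp)) (smul_mem _ _ (subset_span (by simp))))⟩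
  rw [hext] at hmem
  exact hmem

end ProjectivePlane

section DiagonalFrame

open QuadraticMap Module Submodule Projectivization

variable {Q : QuadraticForm F (Fin 3 → F)} {L : Submodule F (Fin 3 → F)}

lemma exists_diagonal_frame [Fintype F] (hQ : NondegQF Q) (hF : ¬ IsSquare (-1 : F))
    (hL : IsExternalLine (conicSet Q) L) :
    ∃ f₁ f₂ p : Fin 3 → F, ∃ g : F, g ≠ 0 ∧ f₁ ∈ L ∧ f₂ ∈ L ∧ p ∉ L ∧
      (∀ v, ∃ x y z : F, v = x • f₁ + y • f₂ + z • p) ∧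
      ∀ x y z : F, Q (x • f₁ + y • f₂ + z • p) = x * x + y * y - g * (z * z) := by
  have h2 := two_ne_zero_of_not_isSquare_neg_one hF
  have hL2 : finrank F L = 2 := hL.1
  obtain ⟨f₁, hf₁L, f₂, hf₂L, hf₁, hf₂, h12⟩ := exists_orthonormal_pair hF hL2 fun v hv h => by
    by_contra hv0
    exact ne_zero_of_isExternalLine hL hv hv0 h
  have hspan := span_pair_eq_of_orthonormal h2 hL2 hf₁L hf₂L hf₁ hf₂ h12
  have hLtop : L ≠ ⊤ := by
    rintro rfl
    rw [finrank_top, finrank_fin_fun] at hL2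
    omega
  obtain ⟨p, hp, h1p, h2p⟩ := exists_polar_eq_zero_of_ne_top h2 hLtop hf₁L hf₂L hf₁ hf₂ h12
  have hpL : ∀ w ∈ L, polar Q p w = 0 := by
    rw [← hspan]
    intro w hw
    obtain ⟨a, b, rfl⟩ := mem_span_pair.1 hw
    simp [polar_comm Q p, h1p, h2p]
  have hQp : Q p ≠ 0 := fun h => (show p ≠ 0 by rintro rfl; exact hp (zero_mem L))
    (eq_zero_of_polar_eq_zero hQ hL2 hp hpL (by rw [polar_self_eq_two_mul, h, mul_zero]))
  refine ⟨f₁, f₂, p, -Q p, neg_ne_zero.2 hQp, hf₁L, hf₂L, hp, fun v => ?_, fun x y z => ?_⟩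
  · have hv : v ∈ L ⊔ span F {p} := by rw [sup_span_singleton_eq_top hL2 hp]; exact mem_top
    obtain ⟨l, hl, w, hw, rfl⟩ := mem_sup.1 hv
    rw [← hspan] at hl
    obtain ⟨x, y, rfl⟩ := mem_span_pair.1 hl
    obtain ⟨z, rfl⟩ := mem_span_singleton.1 hw
    exact ⟨x, y, z, rfl⟩
  · rw [QuadraticMap.map_add (⇑Q), map_smul_add_smul, QuadraticMap.map_smul, polar_smul_right,
      polar_comm Q _ p, hpL _ (add_mem (smul_mem _ _ hf₁L) (smul_mem _ _ hf₂L)), hf₁, hf₂, h12,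
      smul_eq_mul, smul_zero]
    ring

lemma isExteriorPoint_of_diag (hQ : NondegQF Q) {f₁ f₂ p : Fin 3 → F} {g : F}
    (hdiag : ∀ x y z : F, Q (x • f₁ + y • f₂ + z • p) = x * x + y * y - g * (z * z))
    (hf₁L : f₁ ∈ L) (hf₂L : f₂ ∈ L) (hp : p ∉ L) {x y : F} (hxy : x * x + y * y = g) (hg : g ≠ 0)
    (hs : x • f₁ + y • f₂ ≠ 0) : IsExteriorPoint (conicSet Q) (mk F (x • f₁ + y • f₂) hs) := by
  have hs' : x • f₁ + y • f₂ = x • f₁ + y • f₂ + (0 : F) • p := by rw [zero_smul, add_zero]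
  -- the tangent at the conic point `(y, -x, 1)` passes through `s = (x, y, 0)`
  have hc : y • f₁ + (-x) • f₂ + (1 : F) • p ≠ 0 := fun h => hp <| by
    rw [show p = -(y • f₁ + (-x) • f₂) by rw [← sub_eq_zero, ← h]; module]
    exact neg_mem (add_mem (smul_mem _ _ hf₁L) (smul_mem _ _ hf₂L))
  refine isExteriorPoint_mk hQ hc ?_ hs ?_ ?_
  · rw [hdiag]
    linear_combination hxy
  · rw [hs', hdiag]
    simpa [hxy] using hg
  · rw [hs', polar_eq_of_diag hdiag]
    ring

end DiagonalFrame

/-- `q ≡ 3 (mod 4)`; if the set `S` of exterior points of an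
irreducible conic `C` on an external line `L`, extended by a point `Q₀`, is an
exterior set of `C`, then `Q₀` lies on `L`. -/
theorem stmt_12 [Fintype F] (hq : Fintype.card F % 4 = 3)
    (Q : QuadraticForm F (Fin 3 → F)) (hQ : NondegQF Q)
    (L : Submodule F (Fin 3 → F)) (hL : IsExternalLine (conicSet Q) L)
    (Q0 : PGPoint F)
    (hQ0 : IsExteriorSet (conicSet Q)
      ({P ∈ pointsOn L | IsExteriorPoint (conicSet Q) P} ∪ {Q0})) :
    Q0 ∈ pointsOn L := by
  by_contra hQ0L
  rw [← Q0.mk_rep, mk_mem_pointsOn_iff] at hQ0L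
  have hF : ¬ IsSquare (-1 : F) := by rw [FiniteField.isSquare_neg_one_iff]; omega
  obtain ⟨f₁, f₂, p, g, hg, hf₁L, hf₂L, hp, hspan, hdiag⟩ := exists_diagonal_frame hQ hF hL
  obtain ⟨u₁, u₂, t, hq₀⟩ := hspan Q0.rep
  have ht : t ≠ 0 := by
    rintro rfl
    rw [zero_smul, add_zero] at hq₀
    exact hQ0L (hq₀ ▸ add_mem (Submodule.smul_mem _ _ hf₁L) (Submodule.smul_mem _ _ hf₂L))
  obtain ⟨x, y, b, hxy, hb⟩ := exists_direction_to_circle hF hg ht u₁ u₂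
  set s := x • f₁ + y • f₂
  have hsL : s ∈ L := add_mem (Submodule.smul_mem _ _ hf₁L) (Submodule.smul_mem _ _ hf₂L)
  have hQs : Q s = g := by simpa [hxy] using hdiag x y 0
  have hs : s ≠ 0 := fun h => hg (by rw [← hQs, h, QuadraticMap.map_zero])
  have hind := linearIndependent_pair_of_notMem hQ0L hsL hs
  refine not_isExternalLine_span_pair hind (b := b) ?_ <| hQ0.isExternalLine_span_pair hind
    Q0.rep_nonzero hs (Or.inr (by simp)) (Or.inl ⟨(mk_mem_pointsOn_iff hs).2 hsL,
      isExteriorPoint_of_diag hQ hdiag hf₁L hf₂L hp hxy hg hs⟩)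
  rw [show Q0.rep + b • s = (u₁ + b * x) • f₁ + (u₂ + b * y) • f₂ + t • p by rw [hq₀]; module,
    hdiag, hb]
  ring
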